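/- Let a, b > 0 and g ∈ L²(ℝ) be such that the Gabor system G = (E_{mb} T_{na} g)_{(m,n)∈ℤ²} is a frame for L²(ℝ), and let g^d ∈ L²(ℝ) be such that G^d = (E_{mb} T_{na} g^d)_{(m,n)∈ℤ²} is a dual Gabor frame of G. Let A be a bounded operator on L²(ℝ) with ‖Id − A‖ < 1 that commutes with E_b, E_{−b}, T_a and T_{−a}. Set g^{ad} = A* S_G^{-1} g − g + S_G(g^d), where S_G is the frame operator of G. Then G^{ad} = (E_{mb} T_{na} g^{ad})_{(m,n)∈ℤ²} is an approximately dual frame of G, and T_G U_{G^{ad}} = A. -/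

import Mathlib

noncomputable section

open ContinuousLinearMap MeasureTheory
open scoped ComplexInnerProductSpace ENNReal

/-- The Hilbert space `L²(ℝ)` (complex valued, Lebesgue measure). -/
abbrev L2R : Type := MeasureTheory.Lp ℂ 2 (MeasureTheory.volume : MeasureTheory.Measure ℝ)

/-- The sequence space `ℓ²(ℤ × ℤ)`, indexing Gabor systems. -/
abbrev GLtwo : Type := lp (fun _ : ℤ × ℤ => ℂ) 2

/-- A family `φ` indexed by `ℤ × ℤ` is a Bessel family with bound `M`:
`∑_{m,n} |⟨f, φ_{m,n}⟩|² ≤ M‖f‖²`.  (Mathlib inner products are conjugate-linear in the first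
slot, so `⟪φ i, f⟫` corresponds to the paper's `⟨f, φ_i⟩`.) -/
def IsBesselBoundZ (φ : ℤ × ℤ → L2R) (M : ℝ) : Prop :=
  ∀ f : L2R, Summable (fun i : ℤ × ℤ => ‖(⟪φ i, f⟫ : ℂ)‖ ^ 2) ∧
    ∑' i : ℤ × ℤ, ‖(⟪φ i, f⟫ : ℂ)‖ ^ 2 ≤ M * ‖f‖ ^ 2

/-- A family `φ` indexed by `ℤ × ℤ` is a frame with bounds `m`, `M`. -/
def IsFrameWithZ (φ : ℤ × ℤ → L2R) (m M : ℝ) : Prop :=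
  0 < m ∧ IsBesselBoundZ φ M ∧
    ∀ f : L2R, m * ‖f‖ ^ 2 ≤ ∑' i : ℤ × ℤ, ‖(⟪φ i, f⟫ : ℂ)‖ ^ 2

/-- A family `φ` indexed by `ℤ × ℤ` is a frame. -/
def IsFrameZ (φ : ℤ × ℤ → L2R) : Prop := ∃ m M, IsFrameWithZ φ m M

/-- `U` is the analysis operator of the family `φ`; the synthesis operator is `adjoint U`
and the frame operator is `adjoint U ∘L U`. -/
def IsAnalysisOpZ (φ : ℤ × ℤ → L2R) (U : L2R →L[ℂ] GLtwo) : Prop :=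
  ∀ (f : L2R) (i : ℤ × ℤ), U f i = (⟪φ i, f⟫ : ℂ)

/-!
The time–frequency shifts `P (m, n) = E (m b) ∘ Tr (n a)` are unitary and, by the commutation
relation `Tr α ∘ E β = e^{-2πiβα} E β ∘ Tr α`, satisfy `P j* P i = c • P (i - j)` with `|c| = 1`.
So conjugating a Gabor system by `P j` only reindexes it up to unimodular phases, which leaves its
frame operator `S` unchanged: `S` commutes with every `P j`, hence so do `S⁻¹` and, since `A`
commutes with the generators and `P j` is unitary, also `A*`. Therefore
`U S⁻¹ A - U + U_d S` is the analysis operator of the Gabor system generated by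
`g^{ad} = A* S⁻¹ g - g + S g^d`, and its composition with `T_G = U*` is `S S⁻¹ A - S + S = A`.
-/

lemma commute_intCast_mul_of_hom {R : Type*} [Monoid R] {W : ℝ → R}
    (hmul : ∀ β γ, W β * W γ = W (β + γ)) (hzero : W 0 = 1)
    {a : R} {c : ℝ} (hc : Commute a (W c)) (hc' : Commute a (W (-c))) (m : ℤ) :
    Commute a (W (m * c)) := by
  induction m using Int.induction_on with
  | zero => simp [hzero]
  | succ n ih =>
    rw [show ((n + 1 : ℤ) : ℝ) * c = n * c + c by push_cast; ring, ← hmul]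
    exact ih.mul_right hc
  | pred n ih =>
    rw [show ((-n - 1 : ℤ) : ℝ) * c = ((-n : ℤ) : ℝ) * c + -c by push_cast; ring, ← hmul]
    exact ih.mul_right hc'

lemma commute_star_of_mem_unitary {R : Type*} [Monoid R] [StarMul R] {u a : R}
    (hu : u ∈ unitary R) (h : Commute u a) : Commute u (star a) := by
  rw [commute_unitary_iff_star_right_conjugate hu] at h ⊢
  simpa only [star_mul, star_star, mul_assoc] using congrArg star h

lemma IsSelfAdjoint.of_mul_eq_one {R : Type*} [Monoid R] [StarMul R] {s t : R}
    (hs : IsSelfAdjoint s) (hst : s * t = 1) : IsSelfAdjoint t :=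
  left_inv_eq_right_inv (by simpa [hs.star_eq] using congrArg star hst) hst

section OneParameterGroup

variable {H : Type*} [NormedAddCommGroup H] [InnerProductSpace ℂ H] [CompleteSpace H]
  {W : ℝ → H →L[ℂ] H}

lemma adjoint_eq_neg_of_isometric_hom (hmul : ∀ β γ, W β * W γ = W (β + γ)) (hzero : W 0 = 1)
    (hinner : ∀ β (f h : H), ⟪W β f, W β h⟫ = ⟪f, h⟫) (β : ℝ) :
    adjoint (W β) = W (-β) := by
  refine ((eq_adjoint_iff _ _).2 fun f h => ?_).symm
  calc ⟪W (-β) f, h⟫ = ⟪(W β * W (-β)) f, W β h⟫ := by rw [mul_apply_eq_comp, hinner]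
    _ = ⟪f, W β h⟫ := by rw [hmul, add_neg_cancel, hzero, one_apply_eq_self]

lemma mem_unitary_of_isometric_hom (hmul : ∀ β γ, W β * W γ = W (β + γ)) (hzero : W 0 = 1)
    (hinner : ∀ β (f h : H), ⟪W β f, W β h⟫ = ⟪f, h⟫) (β : ℝ) :
    W β ∈ unitary (H →L[ℂ] H) := by
  rw [Unitary.mem_iff, star_eq_adjoint, adjoint_eq_neg_of_isometric_hom hmul hzero hinner,
    hmul, hmul, neg_add_cancel, add_neg_cancel, hzero]
  exact ⟨rfl, rfl⟩

end OneParameterGroup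

def IsModulation (E : ℝ → L2R →L[ℂ] L2R) : Prop :=
  ∀ (β : ℝ) (f : L2R), (E β f : ℝ → ℂ) =ᵐ[volume]
    fun x => Complex.exp (((2 * Real.pi * β * x : ℝ) : ℂ) * Complex.I) * f x

def IsTranslation (Tr : ℝ → L2R →L[ℂ] L2R) : Prop :=
  ∀ (α : ℝ) (f : L2R), (Tr α f : ℝ → ℂ) =ᵐ[volume] fun x => f (x - α)

namespace IsModulation

variable {E : ℝ → L2R →L[ℂ] L2R} (hE : IsModulation E)
include hE

lemma mul_eq (β γ : ℝ) : E β * E γ = E (β + γ) := by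
  refine ContinuousLinearMap.ext fun f => Lp.ext ?_
  filter_upwards [hE β (E γ f), hE γ f, hE (β + γ) f] with x hx₁ hx₂ hx₃
  rw [mul_apply_eq_comp, hx₁, hx₂, hx₃, ← mul_assoc, ← Complex.exp_add]
  push_cast
  ring_nf

lemma zero_eq : E 0 = 1 := by
  refine ContinuousLinearMap.ext fun f => Lp.ext ?_
  filter_upwards [hE 0 f] with x hx
  simp [hx]

lemma inner_map_map (β : ℝ) (f h : L2R) : ⟪E β f, E β h⟫ = ⟪f, h⟫ := by
  rw [L2.inner_def, L2.inner_def]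
  refine integral_congr_ae ?_
  filter_upwards [hE β f, hE β h] with x hx₁ hx₂
  have hunit := Complex.conj_mul' (Complex.exp (((2 * Real.pi * β * x : ℝ) : ℂ) * Complex.I))
  rw [Complex.norm_exp_ofReal_mul_I, Complex.ofReal_one, one_pow] at hunit
  rw [hx₁, hx₂]
  simp only [RCLike.inner_apply, map_mul]
  linear_combination (starRingEnd ℂ ((f : ℝ → ℂ) x) * (h : ℝ → ℂ) x) * hunit

lemma adjoint_eq (β : ℝ) : adjoint (E β) = E (-β) :=
  adjoint_eq_neg_of_isometric_hom hE.mul_eq hE.zero_eq hE.inner_map_map β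

lemma mem_unitary (β : ℝ) : E β ∈ unitary (L2R →L[ℂ] L2R) :=
  mem_unitary_of_isometric_hom hE.mul_eq hE.zero_eq hE.inner_map_map β

end IsModulation

namespace IsTranslation

variable {Tr : ℝ → L2R →L[ℂ] L2R} (hTr : IsTranslation Tr)
include hTr

lemma mul_eq (α γ : ℝ) : Tr α * Tr γ = Tr (α + γ) := by
  refine ContinuousLinearMap.ext fun f => Lp.ext ?_
  have hshift := (measurePreserving_sub_right volume α).quasiMeasurePreserving.ae_eq_comp
    (hTr γ f)
  filter_upwards [hTr α (Tr γ f), hshift, hTr (α + γ) f] with x hx₁ hx₂ hx₃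
  rw [mul_apply_eq_comp, hx₁, hx₃]
  exact hx₂.trans (by simp only [Function.comp_apply, sub_sub])

lemma zero_eq : Tr 0 = 1 := by
  refine ContinuousLinearMap.ext fun f => Lp.ext ?_
  filter_upwards [hTr 0 f] with x hx
  simp [hx]

lemma inner_map_map (α : ℝ) (f h : L2R) : ⟪Tr α f, Tr α h⟫ = ⟪f, h⟫ := by
  rw [L2.inner_def, L2.inner_def,
    ← integral_sub_right_eq_self (fun x => ⟪(f : ℝ → ℂ) x, (h : ℝ → ℂ) x⟫) α]
  refine integral_congr_ae ?_
  filter_upwards [hTr α f, hTr α h] with x hx₁ hx₂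
  rw [hx₁, hx₂]

lemma adjoint_eq (α : ℝ) : adjoint (Tr α) = Tr (-α) :=
  adjoint_eq_neg_of_isometric_hom hTr.mul_eq hTr.zero_eq hTr.inner_map_map α

lemma mem_unitary (α : ℝ) : Tr α ∈ unitary (L2R →L[ℂ] L2R) :=
  mem_unitary_of_isometric_hom hTr.mul_eq hTr.zero_eq hTr.inner_map_map α

lemma mul_modulation {E : ℝ → L2R →L[ℂ] L2R} (hE : IsModulation E) (α β : ℝ) :
    Tr α * E β =
      Complex.exp (-(((2 * Real.pi * β * α : ℝ) : ℂ) * Complex.I)) • (E β * Tr α) := by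
  refine ContinuousLinearMap.ext fun f => Lp.ext ?_
  have hshift := (measurePreserving_sub_right volume α).quasiMeasurePreserving.ae_eq_comp
    (hE β f)
  filter_upwards [hTr α (E β f), hshift, hE β (Tr α f), hTr α f,
    Lp.coeFn_smul (Complex.exp (-(((2 * Real.pi * β * α : ℝ) : ℂ) * Complex.I))) (E β (Tr α f))]
    with x hx₁ hx₂ hx₃ hx₄ hx₅
  rw [mul_apply_eq_comp, hx₁, smul_apply, mul_apply_eq_comp, hx₅, Pi.smul_apply, hx₃, hx₄]
  simp only [Function.comp_apply] at hx₂
  rw [hx₂, smul_eq_mul, ← mul_assoc, ← Complex.exp_add]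
  push_cast
  ring_nf

end IsTranslation

namespace IsAnalysisOpZ

variable {φ ψ : ℤ × ℤ → L2R} {U V : L2R →L[ℂ] GLtwo}

lemma comp (hU : IsAnalysisOpZ φ U) (B : L2R →L[ℂ] L2R) :
    IsAnalysisOpZ (fun i => adjoint B (φ i)) (U ∘L B) := fun f i => by
  rw [comp_apply, hU, adjoint_inner_left]

lemma comp_of_commute {P : ℤ × ℤ → L2R →L[ℂ] L2R} {g : L2R}
    (hU : IsAnalysisOpZ (fun i => P i g) U) {B : L2R →L[ℂ] L2R}
    (hB : ∀ i, Commute (P i) (adjoint B)) :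
    IsAnalysisOpZ (fun i => P i (adjoint B g)) (U ∘L B) := by
  convert hU.comp B using 2 with i
  exact DFunLike.congr_fun (hB i).eq g

lemma add (hU : IsAnalysisOpZ φ U) (hV : IsAnalysisOpZ ψ V) :
    IsAnalysisOpZ (φ + ψ) (U + V) := fun f i => by
  rw [add_apply, lp.coeFn_add, Pi.add_apply, hU, hV, Pi.add_apply, inner_add_left]

lemma sub (hU : IsAnalysisOpZ φ U) (hV : IsAnalysisOpZ ψ V) :
    IsAnalysisOpZ (φ - ψ) (U - V) := fun f i => by
  rw [sub_apply, lp.coeFn_sub, Pi.sub_apply, hU, hV, Pi.sub_apply, inner_sub_left]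

lemma isBesselBoundZ (hU : IsAnalysisOpZ φ U) : IsBesselBoundZ φ (‖U‖ ^ 2) := fun f => by
  have hsum := lp.hasSum_norm (p := 2) (by norm_num) (U f)
  simp only [hU f, ENNReal.toReal_ofNat, Real.rpow_two] at hsum
  refine ⟨hsum.summable, hsum.tsum_eq ▸ ?_⟩
  rw [← mul_pow]
  exact pow_le_pow_left₀ (norm_nonneg _) (U.le_opNorm f) 2

lemma inner_frameOp (hU : IsAnalysisOpZ φ U) (u v : L2R) :
    ⟪(adjoint U ∘L U) u, v⟫ = ∑' i, starRingEnd ℂ ⟪φ i, u⟫ * ⟪φ i, v⟫ := by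
  rw [comp_apply, adjoint_inner_left, lp.inner_eq_tsum]
  exact tsum_congr fun i => by rw [RCLike.inner_apply, hU, hU, mul_comm]

lemma frameOp_eq_of_phase_reindex (hU : IsAnalysisOpZ φ U) (hV : IsAnalysisOpZ ψ V)
    (σ : ℤ × ℤ ≃ ℤ × ℤ) (c : ℤ × ℤ → ℂ) (hc : ∀ i, ‖c i‖ = 1)
    (hψ : ∀ i, ψ i = c i • φ (σ i)) :
    adjoint V ∘L V = adjoint U ∘L U := by
  refine ContinuousLinearMap.ext fun u => ext_inner_right ℂ fun v => ?_
  have hterm : ∀ i, starRingEnd ℂ ⟪ψ i, u⟫ * ⟪ψ i, v⟫ =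
      starRingEnd ℂ ⟪φ (σ i), u⟫ * ⟪φ (σ i), v⟫ := fun i => by
    have hunit := Complex.conj_mul' (c i)
    rw [hc, Complex.ofReal_one, one_pow] at hunit
    simp only [hψ, inner_smul_left, map_mul, Complex.conj_conj]
    linear_combination (starRingEnd ℂ ⟪φ (σ i), u⟫ * ⟪φ (σ i), v⟫) * hunit
  rw [hV.inner_frameOp, hU.inner_frameOp, tsum_congr hterm]
  exact σ.tsum_eq fun i => starRingEnd ℂ ⟪φ i, u⟫ * ⟪φ i, v⟫

lemma commute_frameOp_of_phase_reindex (hU : IsAnalysisOpZ φ U) {W : L2R →L[ℂ] L2R}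
    (hW : W ∈ unitary (L2R →L[ℂ] L2R)) (σ : ℤ × ℤ ≃ ℤ × ℤ) (c : ℤ × ℤ → ℂ)
    (hc : ∀ i, ‖c i‖ = 1) (hWφ : ∀ i, adjoint W (φ i) = c i • φ (σ i)) :
    Commute W (adjoint U ∘L U) := by
  have hconj := frameOp_eq_of_phase_reindex hU (hU.comp W) σ c hc hWφ
  rw [adjoint_comp] at hconj
  exact (commute_unitary_iff_star_left_conjugate hW).2 hconj

end IsAnalysisOpZ

def tfShift (E Tr : ℝ → L2R →L[ℂ] L2R) (a b : ℝ) (i : ℤ × ℤ) : L2R →L[ℂ] L2R :=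
  E (i.1 * b) * Tr (i.2 * a)

section TimeFrequencyShift

variable {E Tr : ℝ → L2R →L[ℂ] L2R} (hE : IsModulation E) (hTr : IsTranslation Tr) (a b : ℝ)
include hE hTr

lemma tfShift_mem_unitary (i : ℤ × ℤ) : tfShift E Tr a b i ∈ unitary (L2R →L[ℂ] L2R) :=
  Submonoid.mul_mem _ (hE.mem_unitary _) (hTr.mem_unitary _)

lemma adjoint_tfShift_mul_tfShift (j i : ℤ × ℤ) :
    ∃ c : ℂ, ‖c‖ = 1 ∧
      adjoint (tfShift E Tr a b j) * tfShift E Tr a b i = c • tfShift E Tr a b (i - j) := by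
  refine ⟨_, Complex.norm_exp_ofReal_mul_I
    (-(2 * Real.pi * (-(j.1 * b) + i.1 * b) * -(j.2 * a))), ?_⟩
  have hsub : ∀ (k l : ℤ) (r : ℝ), ((k - l : ℤ) : ℝ) * r = -(l * r) + k * r := fun k l r => by
    push_cast; ring
  unfold tfShift
  rw [← star_eq_adjoint, star_mul, star_eq_adjoint, star_eq_adjoint, hE.adjoint_eq,
    hTr.adjoint_eq, Prod.fst_sub, Prod.snd_sub, hsub, hsub, ← hTr.mul_eq, mul_assoc,
    ← mul_assoc (E _), hE.mul_eq, ← mul_assoc, hTr.mul_modulation hE, smul_mul_assoc,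
    mul_assoc (E _), Complex.ofReal_neg, neg_mul]

lemma commute_tfShift {A : L2R →L[ℂ] L2R} (hEb : Commute A (E b)) (hEb' : Commute A (E (-b)))
    (hTa : Commute A (Tr a)) (hTa' : Commute A (Tr (-a))) (i : ℤ × ℤ) :
    Commute A (tfShift E Tr a b i) :=
  (commute_intCast_mul_of_hom hE.mul_eq hE.zero_eq hEb hEb' i.1).mul_right
    (commute_intCast_mul_of_hom hTr.mul_eq hTr.zero_eq hTa hTa' i.2)

lemma commute_tfShift_frameOp {g : L2R} {U : L2R →L[ℂ] GLtwo}
    (hU : IsAnalysisOpZ (fun i => tfShift E Tr a b i g) U) (j : ℤ × ℤ) :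
    Commute (tfShift E Tr a b j) (adjoint U ∘L U) := by
  choose c hc hphase using fun i => adjoint_tfShift_mul_tfShift hE hTr a b j i
  refine hU.commute_frameOp_of_phase_reindex (tfShift_mem_unitary hE hTr a b j)
    (Equiv.subRight j) c hc fun i => ?_
  simpa only [mul_apply_eq_comp, smul_apply, Equiv.subRight_apply] using
    congrArg (· g) (hphase i)

end TimeFrequencyShift

theorem statement19_general (a b : ℝ)
    (E Tr : ℝ → (L2R →L[ℂ] L2R))
    (hE : ∀ (β : ℝ) (f : L2R),
      (E β f : ℝ → ℂ) =ᵐ[volume]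
        fun x => Complex.exp (((2 * Real.pi * β * x : ℝ) : ℂ) * Complex.I) * f x)
    (hTr : ∀ (α : ℝ) (f : L2R), (Tr α f : ℝ → ℂ) =ᵐ[volume] fun x => f (x - α))
    (g gd : L2R)
    (U Ud : L2R →L[ℂ] GLtwo)
    (hU : IsAnalysisOpZ (fun i : ℤ × ℤ => E (i.1 * b) (Tr (i.2 * a) g)) U)
    (hUd : IsAnalysisOpZ (fun i : ℤ × ℤ => E (i.1 * b) (Tr (i.2 * a) gd)) Ud)
    (hdual : adjoint U ∘L Ud = 1)
    (Sinv : L2R →L[ℂ] L2R)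
    (hS1 : (adjoint U ∘L U) ∘L Sinv = 1) (hS2 : Sinv ∘L (adjoint U ∘L U) = 1)
    (A : L2R →L[ℂ] L2R) (hA : ‖(1 : L2R →L[ℂ] L2R) - A‖ < 1)
    (hAEb : A ∘L E b = E b ∘L A) (hAEb' : A ∘L E (-b) = E (-b) ∘L A)
    (hATa : A ∘L Tr a = Tr a ∘L A) (hATa' : A ∘L Tr (-a) = Tr (-a) ∘L A)
    (gad : L2R) (hgad : gad = adjoint A (Sinv g) - g + (adjoint U ∘L U) gd) :
    ∃ (M : ℝ) (V : L2R →L[ℂ] GLtwo),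
      IsBesselBoundZ (fun i : ℤ × ℤ => E (i.1 * b) (Tr (i.2 * a) gad)) M ∧
      IsAnalysisOpZ (fun i : ℤ × ℤ => E (i.1 * b) (Tr (i.2 * a) gad)) V ∧
      ‖(1 : L2R →L[ℂ] L2R) - adjoint U ∘L V‖ < 1 ∧
      adjoint U ∘L V = A := by
  set S := adjoint U ∘L U
  have hS_sa : IsSelfAdjoint S := (isPositive_adjoint_comp_self U).isSelfAdjoint
  have hSinv_adj : adjoint Sinv = Sinv := (hS_sa.of_mul_eq_one hS1).adjoint_eq
  have hPS : ∀ i, Commute (tfShift E Tr a b i) S := commute_tfShift_frameOp hE hTr a b hU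
  have hPSinv : ∀ i, Commute (tfShift E Tr a b i) Sinv := fun i =>
    (hPS i).units_inv_right (u := ⟨S, Sinv, hS1, hS2⟩)
  have hPSinvA : ∀ i, Commute (tfShift E Tr a b i) (adjoint (Sinv ∘L A)) := fun i => by
    rw [adjoint_comp, hSinv_adj, ← star_eq_adjoint]
    refine Commute.mul_right ?_ (hPSinv i)
    exact commute_star_of_mem_unitary (tfShift_mem_unitary hE hTr a b i)
      (commute_tfShift hE hTr a b hAEb hAEb' hATa hATa' i).symm
  set V := U ∘L (Sinv ∘L A) - U + Ud ∘L S
  have hV : IsAnalysisOpZ (fun i => tfShift E Tr a b i gad) V := by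
    have hV' := ((hU.comp_of_commute (P := tfShift E Tr a b) hPSinvA).sub hU).add
      (hUd.comp_of_commute (P := tfShift E Tr a b) (B := S) (by rwa [hS_sa.adjoint_eq]))
    rw [adjoint_comp, hSinv_adj, hS_sa.adjoint_eq] at hV'
    convert hV' using 2 with i
    rw [hgad, map_add, map_sub]
    rfl
  have hTV : adjoint U ∘L V = A := by
    rw [comp_add, comp_sub, ← comp_assoc, ← comp_assoc, ← comp_assoc, hS1, hdual, one_def,
      id_comp, id_comp]
    exact sub_add_cancel A S
  exact ⟨_, V, hV.isBesselBoundZ, hV, hTV ▸ hA, hTV⟩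

/-- Let `a, b > 0`, let `E β` be modulation by `e^{2πiβx}` and `Tr α` be
translation by `α` on `L²(ℝ)`.  Suppose the Gabor system `G = (E (mb) (Tr (na) g))_{m,n}` is a
frame with analysis operator `U` (frame operator `S_G = adjoint U ∘L U`, with inverse `Sinv`),
and `G^d = (E (mb) (Tr (na) g^d))_{m,n}` is a dual Gabor frame of `G` (analysis operator `Ud`,
`T_G U_{G^d} = Id`).  Let `A` be bounded with `‖Id - A‖ < 1`, commuting with `E b`, `E (-b)`,
`Tr a` and `Tr (-a)`, and set `g^{ad} = A* S_G⁻¹ g - g + S_G g^d`.  Then the Gabor system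
`G^{ad} = (E (mb) (Tr (na) g^{ad}))_{m,n}` is an approximately dual frame of `G` (a Bessel
family whose analysis operator `V` satisfies `‖Id - T_G V‖ < 1`) with `T_G U_{G^{ad}} = A`. -/
theorem statement19 (a b : ℝ) (ha : 0 < a) (hb : 0 < b)
    (E Tr : ℝ → (L2R →L[ℂ] L2R))
    (hE : ∀ (β : ℝ) (f : L2R),
      (E β f : ℝ → ℂ) =ᵐ[volume]
        fun x => Complex.exp (((2 * Real.pi * β * x : ℝ) : ℂ) * Complex.I) * f x)
    (hTr : ∀ (α : ℝ) (f : L2R), (Tr α f : ℝ → ℂ) =ᵐ[volume] fun x => f (x - α))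
    (g gd : L2R)
    (hG : IsFrameZ (fun i : ℤ × ℤ => E (i.1 * b) (Tr (i.2 * a) g)))
    (hGd : IsFrameZ (fun i : ℤ × ℤ => E (i.1 * b) (Tr (i.2 * a) gd)))
    (U Ud : L2R →L[ℂ] GLtwo)
    (hU : IsAnalysisOpZ (fun i : ℤ × ℤ => E (i.1 * b) (Tr (i.2 * a) g)) U)
    (hUd : IsAnalysisOpZ (fun i : ℤ × ℤ => E (i.1 * b) (Tr (i.2 * a) gd)) Ud)
    (hdual : adjoint U ∘L Ud = 1)
    (Sinv : L2R →L[ℂ] L2R)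
    (hS1 : (adjoint U ∘L U) ∘L Sinv = 1) (hS2 : Sinv ∘L (adjoint U ∘L U) = 1)
    (A : L2R →L[ℂ] L2R) (hA : ‖(1 : L2R →L[ℂ] L2R) - A‖ < 1)
    (hAEb : A ∘L E b = E b ∘L A) (hAEb' : A ∘L E (-b) = E (-b) ∘L A)
    (hATa : A ∘L Tr a = Tr a ∘L A) (hATa' : A ∘L Tr (-a) = Tr (-a) ∘L A)
    (gad : L2R) (hgad : gad = adjoint A (Sinv g) - g + (adjoint U ∘L U) gd) :
    ∃ (M : ℝ) (V : L2R →L[ℂ] GLtwo),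
      IsBesselBoundZ (fun i : ℤ × ℤ => E (i.1 * b) (Tr (i.2 * a) gad)) M ∧
      IsAnalysisOpZ (fun i : ℤ × ℤ => E (i.1 * b) (Tr (i.2 * a) gad)) V ∧
      ‖(1 : L2R →L[ℂ] L2R) - adjoint U ∘L V‖ < 1 ∧
      adjoint U ∘L V = A :=
  statement19_general a b E Tr hE hTr g gd U Ud hU hUd hdual Sinv hS1 hS2 A hA hAEb hAEb' hATa hATa'
    gad hgad
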